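/- Let X and X' be i.i.d. random variables in [0,1] with variance σ², and let ε > 0, δ ∈ (0,1), k ≥ 1. If σ² ≤ (ε/4)·(ε/log(2k/δ) − 2/3), then P(|X − X'| ≥ ε) ≤ δ/k. -/

import Mathlib

/-!
Chebyshev's inequality for `X - X'`, whose variance is `2σ²`, bounds the probability by
`2σ²/ε²`, which the threshold bounds by `1/(2L)` with `L = log (2k/δ)`, while `δ/k = 2e^{-L}`.
Since `k ≥ 1 > δ` we have `L ≥ log 2`, and `σ² ≥ 0` forces `ε ≥ 2L/3`. So for `L > 3/2` the
event is empty, and for `L ∈ [log 2, 3/2]` it remains to use `e^L ≤ 4L`.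
-/

open MeasureTheory ProbabilityTheory

lemma Real.exp_three_halves_lt_six : Real.exp (3 / 2) < 6 := by
  have h : Real.exp (3 / 2) ^ 2 = Real.exp 1 ^ 3 := by
    rw [← Real.exp_nat_mul, ← Real.exp_nat_mul]; norm_num
  have : Real.exp 1 ^ 3 < 3 ^ 3 :=
    pow_lt_pow_left₀ Real.exp_one_lt_three (Real.exp_pos 1).le (by norm_num)
  nlinarith [Real.exp_pos (3 / 2)]

-- `exp L - 4 L` is convex, so it suffices to check the two endpoints.
lemma Real.exp_le_four_mul_of_mem_Icc {L : ℝ} (hL : L ∈ Set.Icc (Real.log 2) (3 / 2)) :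
    Real.exp L ≤ 4 * L := by
  have hconv : ConvexOn ℝ Set.univ (fun x => Real.exp x - 4 * x) :=
    convexOn_exp.sub (concaveOn_id convex_univ |>.smul (by norm_num : (0 : ℝ) ≤ 4))
  have hseg : L ∈ segment ℝ (Real.log 2) (3 / 2) := by
    rwa [segment_eq_Icc (hL.1.trans hL.2)]
  have hmax := hconv.le_on_segment (Set.mem_univ _) (Set.mem_univ _) hseg
  simp only [Real.exp_log two_pos] at hmax
  have hlog2 := Real.log_two_gt_d9
  have hexp := Real.exp_three_halves_lt_six
  refine sub_nonpos.1 (hmax.trans (max_le ?_ ?_)) <;> linarith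

lemma two_thirds_mul_le_of_threshold_nonneg {ε L : ℝ} (hε : 0 < ε) (hL : 0 < L)
    (h : 0 ≤ ε / 4 * (ε / L - 2 / 3)) : 2 / 3 * L ≤ ε := by
  have hfac : 2 / 3 ≤ ε / L := sub_nonneg.1 ((mul_nonneg_iff_of_pos_left (by positivity)).1 h)
  rwa [le_div_iff₀ hL] at hfac

lemma two_mul_div_sq_le_two_div_exp {v ε L : ℝ} (hε : 0 < ε)
    (hL : L ∈ Set.Icc (Real.log 2) (3 / 2)) (hv : v ≤ ε / 4 * (ε / L - 2 / 3)) :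
    2 * v / ε ^ 2 ≤ 2 / Real.exp L := by
  have hL0 : 0 < L := (Real.log_pos one_lt_two).trans_le hL.1
  calc 2 * v / ε ^ 2 ≤ 2 * (ε / 4 * (ε / L - 2 / 3)) / ε ^ 2 := by gcongr
    _ = 1 / (2 * L) - 1 / (3 * ε) := by field_simp; ring
    _ ≤ 1 / (2 * L) := sub_le_self _ (by positivity)
    _ = 2 / (4 * L) := by field_simp; ring
    _ ≤ 2 / Real.exp L := by gcongr; exact Real.exp_le_four_mul_of_mem_Icc hL

lemma setOf_le_abs_sub_eq_empty {α : Type*} {f g : α → ℝ} (hf : ∀ a, f a ∈ Set.Icc (0 : ℝ) 1)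
    (hg : ∀ a, g a ∈ Set.Icc (0 : ℝ) 1) {ε : ℝ} (hε : 1 < ε) :
    {a | ε ≤ |f a - g a|} = ∅ := by
  refine Set.eq_empty_of_forall_notMem fun a ha => ?_
  obtain ⟨hf0, hf1⟩ := hf a
  obtain ⟨hg0, hg1⟩ := hg a
  have : |f a - g a| ≤ 1 := abs_le.2 ⟨by linarith, by linarith⟩
  exact (this.trans_lt hε).not_ge ha

lemma ProbabilityTheory.IdentDistrib.meas_abs_sub_ge_le_two_mul_variance_div_sq {Ω : Type*} [MeasurableSpace Ω]
    {μ : Measure Ω} [IsProbabilityMeasure μ] {X X' : Ω → ℝ} (hId : IdentDistrib X X' μ μ)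
    (hInd : IndepFun X X' μ) (hX : MemLp X 2 μ) {ε : ℝ} (hε : 0 < ε) :
    μ {ω | ε ≤ |X ω - X' ω|} ≤ ENNReal.ofReal (2 * variance X μ / ε ^ 2) := by
  have hX' : MemLp X' 2 μ := hId.memLp_snd hX
  have hmean : ∫ ω, X ω - X' ω ∂μ = 0 := by
    rw [integral_sub (hX.integrable one_le_two) (hX'.integrable one_le_two), hId.integral_eq,
      sub_self]
  have hvar : variance (X - X') μ = 2 * variance X μ := by
    rw [variance_sub hX hX', hInd.covariance_eq_zero hX hX', ← hId.variance_eq]; ring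
  simpa [hmean, hvar] using meas_ge_le_variance_div_sq (hX.sub hX') hε

theorem stmt2_general {Ω : Type*} [MeasureSpace Ω] [IsProbabilityMeasure (ℙ : Measure Ω)]
    (X X' : Ω → ℝ) (hInd : IndepFun X X' ℙ) (hId : IdentDistrib X X' ℙ ℙ)
    (hbX : ∀ ω, X ω ∈ Set.Icc (0 : ℝ) 1) (hbX' : ∀ ω, X' ω ∈ Set.Icc (0 : ℝ) 1)
    (ε δ k : ℝ) (hε : 0 < ε) (hδ : δ ∈ Set.Ioo (0 : ℝ) 1) (hk : 1 ≤ k)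
    (hvar : variance X ℙ ≤ ε / 4 * (ε / Real.log (2 * k / δ) - 2 / 3)) :
    (ℙ {ω | ε ≤ |X ω - X' ω|}).toReal ≤ δ / k := by
  obtain ⟨hδ0, hδ1⟩ := hδ
  set L := Real.log (2 * k / δ) with hL
  have hL2 : Real.log 2 ≤ L := Real.log_le_log two_pos (by rw [le_div_iff₀ hδ0]; nlinarith)
  have hδk : δ / k = 2 / Real.exp L := by
    rw [hL, Real.exp_log (by positivity)]; field_simp
  have hεL : 2 / 3 * L ≤ ε := two_thirds_mul_le_of_threshold_nonneg hε
    ((Real.log_pos one_lt_two).trans_le hL2) ((variance_nonneg X ℙ).trans hvar)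
  rcases le_or_gt L (3 / 2) with hL32 | hL32
  · have hX : MemLp X 2 ℙ :=
      memLp_of_bounded (ae_of_all _ hbX) hId.aemeasurable_fst.aestronglyMeasurable 2
    rw [hδk]
    refine ENNReal.toReal_le_of_le_ofReal (by positivity) ?_
    exact (hId.meas_abs_sub_ge_le_two_mul_variance_div_sq hInd hX hε).trans
      (ENNReal.ofReal_le_ofReal (two_mul_div_sq_le_two_div_exp hε ⟨hL2, hL32⟩ hvar))
  · rw [setOf_le_abs_sub_eq_empty hbX hbX' (by linarith), measure_empty, ENNReal.toReal_zero]
    positivity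

/-- Lemma 1 of the paper: if the variance of two i.i.d. `[0,1]`-valued random variables
is below the stated threshold, the difference exceeds ε with probability at most δ/k. -/
theorem stmt2 {Ω : Type*} [MeasureSpace Ω] [IsProbabilityMeasure (ℙ : Measure Ω)]
    (X X' : Ω → ℝ) (hInd : IndepFun X X' ℙ) (hId : IdentDistrib X X' ℙ ℙ)
    (hmX : Measurable X) (hmX' : Measurable X')
    (hbX : ∀ ω, X ω ∈ Set.Icc (0 : ℝ) 1) (hbX' : ∀ ω, X' ω ∈ Set.Icc (0 : ℝ) 1)
    (ε δ k : ℝ) (hε : 0 < ε) (hδ : δ ∈ Set.Ioo (0 : ℝ) 1) (hk : 1 ≤ k)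
    (hlog : 0 < Real.log (2 * k / δ))
    (hvar : variance X ℙ ≤ ε / 4 * (ε / Real.log (2 * k / δ) - 2 / 3)) :
    (ℙ {ω | ε ≤ |X ω - X' ω|}).toReal ≤ δ / k :=
  stmt2_general X X' hInd hId hbX hbX' ε δ k hε hδ hk hvar
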